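/- arXiv:1404.4351 — 3 statements merged into one kernel-verified Lean document; each statement's English description precedes it below -/
import Mathlib

section
/- For every α with 0 < α < 2, the improper integral ∫₀^∞ x^{−α}·sin(x) dx converges and equals π/(2·Γ(α)·sin(απ/2)); equivalently, (2·∫₀^∞ x^{−α}·sin(x) dx)^{−1} = Γ(α)·sin(απ/2)/π. -/
/-!
Writing `x ^ (-α) = Γ(α)⁻¹ ∫₀^∞ t ^ (α - 1) e^{-xt} dt` and swapping the integrals gives
`∫₀^T x ^ (-α) sin x dx = Γ(α)⁻¹ ∫₀^∞ t ^ (α - 1) ((1 + t²)⁻¹ - r_T(t)) dt`, where `r_T(t)` comes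
from the elementary antiderivative of `e^{-xt} sin x` and satisfies `|r_T(t)| ≤ e^{-Tt}`; hence the
remainder contributes at most `Γ(α)⁻¹ ∫₀^∞ t ^ (α - 1) e^{-Tt} dt = T ^ (-α)`. The main term is
computed by a second swap, `(1 + t²)⁻¹ = ∫₀^∞ e^{-(1 + t²)u} du`: the inner integral over `t` is
again of Gamma type, and the result is `Γ(α/2) Γ(1 - α/2) / 2 = π / (2 sin (απ/2))` by the
reflection formula.
-/

open MeasureTheory Set Real Filter

lemma integral_rpow_mul_exp_neg_mul_Ioi_eq {a r : ℝ} (ha : 0 < a) (hr : 0 < r) :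
    ∫ t in Ioi 0, t ^ (a - 1) * exp (-(r * t)) = Gamma a * r ^ (-a) := by
  rw [integral_rpow_mul_exp_neg_mul_Ioi ha hr, one_div, inv_rpow hr.le, rpow_neg hr.le, mul_comm]

lemma integrableOn_rpow_mul_exp_neg_mul {a r : ℝ} (ha : 0 < a) (hr : 0 < r) :
    IntegrableOn (fun t : ℝ => t ^ (a - 1) * exp (-(r * t))) (Ioi 0) :=
  .of_integral_ne_zero <| by rw [integral_rpow_mul_exp_neg_mul_Ioi_eq ha hr]; positivity

lemma rpow_neg_eq_integral {a x : ℝ} (ha : 0 < a) (hx : 0 < x) :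
    x ^ (-a) = (Gamma a)⁻¹ * ∫ t in Ioi 0, t ^ (a - 1) * exp (-(x * t)) := by
  rw [integral_rpow_mul_exp_neg_mul_Ioi_eq ha hx, inv_mul_cancel_left₀ (Gamma_pos_of_pos ha).ne']

lemma integral_exp_neg_mul_Ioi_zero {c : ℝ} (hc : 0 < c) :
    ∫ u in Ioi 0, exp (-(c * u)) = c⁻¹ := by
  simpa [neg_mul, neg_div, one_div] using integral_exp_mul_Ioi (neg_lt_zero.2 hc) 0

lemma hasDerivAt_exp_neg_mul_sin_add_cos (t x : ℝ) :
    HasDerivAt (fun x => -(exp (-(x * t)) * (t * sin x + cos x)) / (1 + t ^ 2))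
      (exp (-(x * t)) * sin x) x := by
  have h := (((hasDerivAt_id x).mul_const t).neg.exp.mul
    (((hasDerivAt_sin x).const_mul t).add (hasDerivAt_cos x))).neg.div_const (1 + t ^ 2)
  refine h.congr_deriv ?_
  simp only [Pi.add_apply, Pi.neg_apply, id]
  field_simp
  ring

lemma integral_exp_neg_mul_mul_sin (t T : ℝ) :
    ∫ x in 0..T, exp (-(x * t)) * sin x
      = (1 + t ^ 2)⁻¹ - exp (-(T * t)) * (t * sin T + cos T) / (1 + t ^ 2) := by
  rw [intervalIntegral.integral_eq_sub_of_hasDerivAt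
    (fun x _ => hasDerivAt_exp_neg_mul_sin_add_cos t x)
    (Continuous.intervalIntegrable (by fun_prop) _ _)]
  simp only [zero_mul, neg_zero, exp_zero, sin_zero, mul_zero, cos_zero, zero_add, mul_one]
  ring

lemma abs_exp_neg_mul_mul_sin_add_cos_div_le (t T : ℝ) :
    |exp (-(T * t)) * (t * sin T + cos T) / (1 + t ^ 2)| ≤ exp (-(T * t)) := by
  have h : |t * sin T + cos T| ≤ 1 + t ^ 2 := by
    refine abs_le_of_sq_le_sq ?_ (by positivity)
    -- `(t sin T + cos T)² + (t cos T - sin T)² = 1 + t²`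
    nlinarith [sin_sq_add_cos_sq T, sq_nonneg (t * cos T - sin T), sq_nonneg t]
  rw [abs_div, abs_mul, abs_of_pos (exp_pos _), abs_of_pos (by positivity : (0 : ℝ) < 1 + t ^ 2),
    div_le_iff₀ (by positivity)]
  exact mul_le_mul_of_nonneg_left h (exp_pos _).le

/-- The right-hand side is written as a Gamma kernel with `a = 1 - α / 2` and `r = 1`. -/
lemma integral_rpow_mul_exp_neg_one_add_sq_mul {α u : ℝ} (hα : 0 < α) (hu : 0 < u) :
    ∫ t in Ioi 0, t ^ (α - 1) * exp (-((1 + t ^ 2) * u))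
      = Gamma (α / 2) / 2 * (u ^ (1 - α / 2 - 1) * exp (-(1 * u))) :=
  calc ∫ t in Ioi 0, t ^ (α - 1) * exp (-((1 + t ^ 2) * u))
      = exp (-u) * ∫ t in Ioi 0, t ^ (α - 1) * exp (-u * t ^ (2 : ℝ)) := by
        rw [← integral_const_mul]
        congr 1 with t
        rw [rpow_two, mul_left_comm, ← exp_add]
        ring_nf
    _ = _ := by
        rw [integral_rpow_mul_exp_neg_mul_rpow two_pos (by linarith) hu, sub_add_cancel]
        ring_nf

lemma integrable_rpow_mul_exp_neg_one_add_sq_mul {α : ℝ} (hα : 0 < α) (hα2 : α < 2) :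
    Integrable (fun p : ℝ × ℝ => p.1 ^ (α - 1) * exp (-((1 + p.1 ^ 2) * p.2)))
      ((volume.restrict (Ioi 0)).prod (volume.restrict (Ioi 0))) := by
  have hmeas : Measurable (fun p : ℝ × ℝ => p.1 ^ (α - 1) * exp (-((1 + p.1 ^ 2) * p.2))) := by
    fun_prop
  refine (integrable_prod_iff' hmeas.aestronglyMeasurable).2 ⟨?_, ?_⟩
  · filter_upwards [ae_restrict_mem measurableSet_Ioi] with u (hu : 0 < u)
    exact .of_integral_ne_zero <| by
      rw [integral_rpow_mul_exp_neg_one_add_sq_mul hα hu]; positivity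
  · have hkernel := integrableOn_rpow_mul_exp_neg_mul (by linarith : 0 < 1 - α / 2) one_pos
    refine IntegrableOn.congr_fun (hkernel.const_mul (Gamma (α / 2) / 2))
      (fun u (hu : 0 < u) => ?_) measurableSet_Ioi
    rw [← integral_rpow_mul_exp_neg_one_add_sq_mul hα hu]
    exact setIntegral_congr_fun measurableSet_Ioi fun t (ht : 0 < t) =>
      (norm_of_nonneg (by positivity)).symm

lemma integral_mul_exp_neg_one_add_sq_mul (c t : ℝ) :
    ∫ u in Ioi 0, c * exp (-((1 + t ^ 2) * u)) = c * (1 + t ^ 2)⁻¹ := by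
  rw [integral_const_mul, integral_exp_neg_mul_Ioi_zero (by positivity)]

lemma integrableOn_rpow_mul_inv_one_add_sq {α : ℝ} (hα : 0 < α) (hα2 : α < 2) :
    IntegrableOn (fun t : ℝ => t ^ (α - 1) * (1 + t ^ 2)⁻¹) (Ioi 0) :=
  (integrable_rpow_mul_exp_neg_one_add_sq_mul hα hα2).integral_prod_left.congr <|
    .of_forall fun t => integral_mul_exp_neg_one_add_sq_mul (t ^ (α - 1)) t

lemma integral_rpow_mul_inv_one_add_sq {α : ℝ} (hα : 0 < α) (hα2 : α < 2) :
    ∫ t in Ioi 0, t ^ (α - 1) * (1 + t ^ 2)⁻¹ = π / (2 * sin (α * π / 2)) :=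
  calc ∫ t in Ioi 0, t ^ (α - 1) * (1 + t ^ 2)⁻¹
      = ∫ t in Ioi 0, ∫ u in Ioi 0, t ^ (α - 1) * exp (-((1 + t ^ 2) * u)) := by
        simp only [integral_mul_exp_neg_one_add_sq_mul]
    _ = ∫ u in Ioi 0, ∫ t in Ioi 0, t ^ (α - 1) * exp (-((1 + t ^ 2) * u)) :=
        integral_integral_swap (integrable_rpow_mul_exp_neg_one_add_sq_mul hα hα2)
    _ = ∫ u in Ioi 0, Gamma (α / 2) / 2 * (u ^ (1 - α / 2 - 1) * exp (-(1 * u))) :=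
        setIntegral_congr_fun measurableSet_Ioi fun u (hu : 0 < u) =>
          integral_rpow_mul_exp_neg_one_add_sq_mul hα hu
    _ = Gamma (α / 2) * Gamma (1 - α / 2) / 2 := by
        rw [integral_const_mul, integral_rpow_mul_exp_neg_mul_Ioi_eq (by linarith) one_pos,
          one_rpow, mul_one, div_mul_eq_mul_div]
    _ = π / (2 * sin (α * π / 2)) := by
        rw [Gamma_mul_Gamma_one_sub]
        ring_nf

lemma integrableOn_rpow_neg_mul_abs_sin {α : ℝ} (hα : α < 2) (T : ℝ) :
    IntegrableOn (fun x : ℝ => x ^ (-α) * |sin x|) (Ioc 0 T) := by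
  refine Integrable.mono'
    (intervalIntegral.intervalIntegrable_rpow' (by linarith : -1 < -α + 1)).1
    (by fun_prop : Measurable _).aestronglyMeasurable ?_
  filter_upwards [ae_restrict_mem measurableSet_Ioc] with x hx
  have hpow : 0 ≤ x ^ (-α) := rpow_nonneg hx.1.le _
  rw [norm_of_nonneg (mul_nonneg hpow (abs_nonneg _)), rpow_add_one hx.1.ne']
  exact mul_le_mul_of_nonneg_left (abs_sin_le_abs.trans_eq (abs_of_pos hx.1)) hpow

lemma integrable_rpow_mul_exp_neg_mul_mul_sin {α T : ℝ} (hα : 0 < α) (hα2 : α < 2) :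
    Integrable (fun p : ℝ × ℝ => p.2 ^ (α - 1) * exp (-(p.1 * p.2)) * sin p.1)
      ((volume.restrict (Ioc 0 T)).prod (volume.restrict (Ioi 0))) := by
  have hmeas : Measurable (fun p : ℝ × ℝ => p.2 ^ (α - 1) * exp (-(p.1 * p.2)) * sin p.1) := by
    fun_prop
  refine (integrable_prod_iff hmeas.aestronglyMeasurable).2 ⟨?_, ?_⟩
  · filter_upwards [ae_restrict_mem measurableSet_Ioc] with x hx
    exact (integrableOn_rpow_mul_exp_neg_mul hα hx.1).mul_const _
  · refine IntegrableOn.congr_fun ((integrableOn_rpow_neg_mul_abs_sin hα2 T).const_mul (Gamma α))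
      (fun x hx => Eq.symm ?_) measurableSet_Ioc
    calc ∫ t in Ioi 0, ‖t ^ (α - 1) * exp (-(x * t)) * sin x‖
        = ∫ t in Ioi 0, t ^ (α - 1) * exp (-(x * t)) * |sin x| :=
          setIntegral_congr_fun measurableSet_Ioi fun t (ht : 0 < t) => by
            rw [norm_mul, norm_of_nonneg (by positivity), norm_eq_abs]
      _ = Gamma α * (x ^ (-α) * |sin x|) := by
          rw [integral_mul_const, integral_rpow_mul_exp_neg_mul_Ioi_eq hα hx.1, mul_assoc]

lemma integral_rpow_neg_mul_sin_eq {α T : ℝ} (hα : 0 < α) (hα2 : α < 2) (hT : 0 ≤ T) :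
    ∫ x in 0..T, x ^ (-α) * sin x = (Gamma α)⁻¹ * ∫ t in Ioi 0,
      t ^ (α - 1) * ((1 + t ^ 2)⁻¹ - exp (-(T * t)) * (t * sin T + cos T) / (1 + t ^ 2)) :=
  calc ∫ x in 0..T, x ^ (-α) * sin x
      = ∫ x in 0..T, (Gamma α)⁻¹ * ∫ t in Ioi 0, t ^ (α - 1) * exp (-(x * t)) * sin x := by
        refine intervalIntegral.integral_congr_ae (.of_forall fun x hx => ?_)
        rw [uIoc_of_le hT] at hx
        rw [integral_mul_const, ← mul_assoc, ← rpow_neg_eq_integral hα hx.1]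
    _ = (Gamma α)⁻¹ * ∫ t in Ioi 0, ∫ x in 0..T, t ^ (α - 1) * exp (-(x * t)) * sin x := by
        rw [intervalIntegral.integral_const_mul, intervalIntegral_integral_swap
          (by rw [uIoc_of_le hT]; exact integrable_rpow_mul_exp_neg_mul_mul_sin hα hα2)]
    _ = _ := by
        congr 1
        refine setIntegral_congr_fun measurableSet_Ioi fun t _ => ?_
        simp only [mul_assoc, intervalIntegral.integral_const_mul, integral_exp_neg_mul_mul_sin]

lemma abs_integral_rpow_neg_mul_sin_sub_le {α T : ℝ} (hα : 0 < α) (hα2 : α < 2) (hT : 0 < T) :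
    |(∫ x in 0..T, x ^ (-α) * sin x) - π / (2 * Gamma α * sin (α * π / 2))| ≤ T ^ (-α) := by
  set r : ℝ → ℝ := fun t => exp (-(T * t)) * (t * sin T + cos T) / (1 + t ^ 2)
  have hΓ : 0 < Gamma α := Gamma_pos_of_pos hα
  have hr_le : ∀ᵐ t ∂volume.restrict (Ioi 0),
      ‖t ^ (α - 1) * r t‖ ≤ t ^ (α - 1) * exp (-(T * t)) :=
    ae_restrict_of_forall_mem measurableSet_Ioi fun t (ht : 0 < t) => by
      rw [norm_mul, norm_of_nonneg (rpow_nonneg ht.le _)]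
      exact mul_le_mul_of_nonneg_left (abs_exp_neg_mul_mul_sin_add_cos_div_le t T)
        (rpow_nonneg ht.le _)
  have hr_int : IntegrableOn (fun t => t ^ (α - 1) * r t) (Ioi 0) :=
    (integrableOn_rpow_mul_exp_neg_mul hα hT).mono'
      (by fun_prop : Measurable _).aestronglyMeasurable hr_le
  have hr_bound : ‖∫ t in Ioi 0, t ^ (α - 1) * r t‖ ≤ Gamma α * T ^ (-α) := by
    rw [← integral_rpow_mul_exp_neg_mul_Ioi_eq hα hT]
    exact norm_integral_le_of_norm_le (integrableOn_rpow_mul_exp_neg_mul hα hT) hr_le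
  have hsplit : ∫ x in 0..T, x ^ (-α) * sin x
      = (Gamma α)⁻¹ * (π / (2 * sin (α * π / 2)) - ∫ t in Ioi 0, t ^ (α - 1) * r t) := by
    rw [integral_rpow_neg_mul_sin_eq hα hα2 hT.le, ← integral_rpow_mul_inv_one_add_sq hα hα2,
      ← integral_sub (integrableOn_rpow_mul_inv_one_add_sq hα hα2) hr_int]
    simp only [r, mul_sub]
  have hlimit : (Gamma α)⁻¹ * (π / (2 * sin (α * π / 2)))
      = π / (2 * Gamma α * sin (α * π / 2)) := by
    field_simp
  rw [hsplit, mul_sub, hlimit, sub_sub_cancel_left, abs_neg, abs_mul, abs_of_pos (inv_pos.2 hΓ),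
    inv_mul_le_iff₀ hΓ, ← norm_eq_abs]
  exact hr_bound

theorem stmt4 (α : ℝ) (hα : 0 < α) (hα2 : α < 2) :
    Filter.Tendsto (fun T : ℝ => ∫ x in (0 : ℝ)..T, x ^ (-α) * Real.sin x)
      Filter.atTop
      (nhds (Real.pi / (2 * Real.Gamma α * Real.sin (α * Real.pi / 2)))) := by
  rw [tendsto_iff_norm_sub_tendsto_zero]
  refine squeeze_zero' (.of_forall fun T => norm_nonneg _) ?_ (tendsto_rpow_neg_atTop hα)
  filter_upwards [eventually_gt_atTop 0] with T hT
  exact abs_integral_rpow_neg_mul_sin_sub_le hα hα2 hT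
end

section
/- Let d ≥ 1, α ∈ (0,2], and for k = 1,…,d let c_k ∈ ℝ^d with c_k ≠ 0, β_k ∈ [−1,1], γ_k > 0, μ_k ∈ ℝ. Define λ_k^± = ‖c_k‖₂^α·γ_k·(1 ± β_k)/2, unit vectors s_k = c_k/‖c_k‖₂, and η_k = μ_k if α ≠ 1 and η_k = μ_k − (2β_kγ_k/π)·log‖c_k‖₂ if α = 1, and set μ̃ = Σ_{k=1}^d η_k·c_k ∈ ℝ^d. Then for all q ∈ ℝ^d, ∏_{k=1}^d φ(⟨c_k, q⟩ | α, β_k, γ_k, μ_k) = exp( − Σ_{k=1}^d [ λ_k^+·ψ(⟨s_k, q⟩|α) + λ_k^−·ψ(⟨−s_k, q⟩|α) ] + i·⟨μ̃, q⟩ ). In particular, every d-dimensional distribution whose characteristic function is q ↦ ∏_{k=1}^d φ(⟨c_k,q⟩|α,β_k,γ_k,μ_k) is a multivariate stable distribution whose spectral measure is the finite atomic measure on the unit sphere with mass λ_k^+ at s_k and λ_k^− at −s_k. -/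
open MeasureTheory ProbabilityTheory

/-- `r(q, α)` appearing in the stable characteristic function. -/
noncomputable def rPar (α q : ℝ) : ℝ :=
  if α = 1 then -(2 / Real.pi) * Real.log |q| else Real.tan (α * Real.pi / 2)

/-- The stable characteristic function `φ(q | α, β, γ, μ)`. -/
noncomputable def phi (α β γ μ q : ℝ) : ℂ :=
  Complex.exp (Complex.I * ((μ * q : ℝ) : ℂ) -
    ((γ * |q| ^ α : ℝ) : ℂ) * (1 - Complex.I * ((β * Real.sign q * rPar α q : ℝ) : ℂ)))


/-- `ψ(u | α) = |u|^α (1 - i sign(u) r(u, α))`. -/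
noncomputable def psi (α u : ℝ) : ℂ :=
  ((|u| ^ α : ℝ) : ℂ) * (1 - Complex.I * ((Real.sign u * rPar α u : ℝ) : ℂ))
/-! Write `u = ⟨c, q⟩` and `n = ‖c‖`. Since `ψ(-v) = conj ψ(v)`, the pair `λ⁺ ψ(u/n) + λ⁻ ψ(-u/n)`
equals `n^α γ |u/n|^α (1 - iβ sign(u) r(u/n)) = γ |u|^α (1 - iβ sign(u) r(u/n))`. For `α ≠ 1`,
`r(u/n) = r(u)`; for `α = 1` the logarithm gives `r(u/n) = r(u) + (2/π) log n`, and the resulting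
extra term is the drift `(2βγ/π) log n · u` absorbed into `η`. The product of the one-dimensional
factors is then the exponential of a sum, and linearity of the inner product collects the drifts. -/

open scoped RealInnerProductSpace

lemma rPar_neg (α u : ℝ) : rPar α (-u) = rPar α u := by
  simp only [rPar, abs_neg]

lemma Real.sign_mul_of_pos {t : ℝ} (ht : 0 < t) (u : ℝ) : Real.sign (t * u) = Real.sign u := by
  rcases lt_trichotomy u 0 with hu | rfl | hu
  · rw [Real.sign_of_neg hu, Real.sign_of_neg (mul_neg_of_pos_of_neg ht hu)]
  · rw [mul_zero]
  · rw [Real.sign_of_pos hu, Real.sign_of_pos (mul_pos ht hu)]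

lemma Real.sign_mul_abs (u : ℝ) : Real.sign u * |u| = u := by
  rcases lt_trichotomy u 0 with hu | rfl | hu
  · rw [Real.sign_of_neg hu, abs_of_neg hu, neg_one_mul, neg_neg]
  · rw [abs_zero, mul_zero]
  · rw [Real.sign_of_pos hu, abs_of_pos hu, one_mul]

lemma sign_mul_rPar_mul_of_pos (α : ℝ) {t : ℝ} (ht : 0 < t) (u : ℝ) :
    Real.sign u * rPar α (t * u) =
      Real.sign u * (rPar α u - if α = 1 then 2 / Real.pi * Real.log t else 0) := by
  rcases eq_or_ne u 0 with rfl | hu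
  · rw [Real.sign_zero, zero_mul, zero_mul]
  unfold rPar
  split_ifs
  · rw [abs_mul, abs_of_pos ht, Real.log_mul ht.ne' (abs_ne_zero.mpr hu)]
    ring
  · rw [sub_zero]

lemma ofReal_mul_psi_add_ofReal_mul_psi_neg (α a b u : ℝ) :
    (a : ℂ) * psi α u + (b : ℂ) * psi α (-u) =
      ((|u| ^ α : ℝ) : ℂ) *
        (((a + b : ℝ) : ℂ) - Complex.I * (((a - b) * Real.sign u * rPar α u : ℝ) : ℂ)) := by
  simp only [psi, abs_neg, Real.sign_neg, rPar_neg]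
  push_cast
  ring

lemma phi_eq_exp_psi (α β γ μ : ℝ) {n : ℝ} (hn : 0 < n) (u : ℝ) :
    phi α β γ μ u =
      Complex.exp (-(((n ^ α * γ * (1 + β) / 2 : ℝ) : ℂ) * psi α (n⁻¹ * u) +
          ((n ^ α * γ * (1 - β) / 2 : ℝ) : ℂ) * psi α (-(n⁻¹ * u))) +
        Complex.I * (((if α = 1 then μ - 2 * β * γ / Real.pi * Real.log n else μ) * u : ℝ) : ℂ)) := by
  have hscale : n ^ α * |n⁻¹ * u| ^ α = |u| ^ α := by
    rw [abs_mul, abs_inv, abs_of_pos hn, Real.mul_rpow (inv_nonneg.mpr hn.le) (abs_nonneg u),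
      Real.inv_rpow hn.le, mul_inv_cancel_left₀ (Real.rpow_pos_of_pos hn α).ne']
  have hscaleC := congrArg Complex.ofReal hscale
  have hsign := sign_mul_rPar_mul_of_pos α (inv_pos.mpr hn) u
  rw [Real.log_inv] at hsign
  rw [phi, ofReal_mul_psi_add_ofReal_mul_psi_neg, Real.sign_mul_of_pos (inv_pos.mpr hn)]
  congr 1
  split_ifs at hsign ⊢ with hα
  · have hsignC := congrArg Complex.ofReal hsign
    have hu := congrArg Complex.ofReal (Real.sign_mul_abs u)
    subst hα
    simp only [Real.rpow_one] at hscaleC ⊢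
    push_cast at hscaleC hsignC hu ⊢
    linear_combination (γ - Complex.I * γ * β * u.sign * rPar 1 u
        - Complex.I * γ * β * u.sign * (2 / Real.pi * Real.log n)) * hscaleC
      - Complex.I * γ * β * n * (|n⁻¹ * u| : ℝ) * hsignC
      - Complex.I * γ * β * (2 / Real.pi * Real.log n) * hu
  · have hsignC := congrArg Complex.ofReal (hsign.trans (by rw [sub_zero]))
    push_cast at hscaleC hsignC ⊢
    linear_combination (γ - Complex.I * γ * β * u.sign * rPar α u) * hscaleC
      - Complex.I * γ * β * (n ^ α : ℝ) * (|n⁻¹ * u| ^ α : ℝ) * hsignC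

theorem stmt6_general (d : ℕ) (α : ℝ)
    (c : Fin d → EuclideanSpace ℝ (Fin d)) (hc : ∀ k, c k ≠ 0)
    (β γ μ : Fin d → ℝ) :
    ∀ q : EuclideanSpace ℝ (Fin d),
      ∏ k, phi α (β k) (γ k) (μ k) ⟪c k, q⟫ =
        Complex.exp (
          -(∑ k, (((‖c k‖ ^ α * γ k * (1 + β k) / 2 : ℝ) : ℂ) * psi α ⟪‖c k‖⁻¹ • c k, q⟫ +
              ((‖c k‖ ^ α * γ k * (1 - β k) / 2 : ℝ) : ℂ) * psi α ⟪-(‖c k‖⁻¹ • c k), q⟫)) +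
          Complex.I *
            ((⟪∑ k, (if α = 1 then μ k - 2 * β k * γ k / Real.pi * Real.log ‖c k‖ else μ k) • c k,
                q⟫ : ℝ) : ℂ)) := by
  intro q
  simp_rw [fun k => phi_eq_exp_psi α (β k) (γ k) (μ k) (norm_pos_iff.mpr (hc k)) ⟪c k, q⟫,
    ← Complex.exp_sum, sum_inner, inner_neg_left, real_inner_smul_left]
  congr 1
  push_cast
  rw [Finset.sum_add_distrib, Finset.mul_sum, Finset.sum_neg_distrib]

theorem stmt6 (d : ℕ) (hd : 1 ≤ d) (α : ℝ) (hα : 0 < α) (hα2 : α ≤ 2)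
    (c : Fin d → EuclideanSpace ℝ (Fin d)) (hc : ∀ k, c k ≠ 0)
    (β γ μ : Fin d → ℝ)
    (hβ : ∀ k, β k ∈ Set.Icc (-1 : ℝ) 1) (hγ : ∀ k, 0 < γ k) :
    ∀ q : EuclideanSpace ℝ (Fin d),
      ∏ k, phi α (β k) (γ k) (μ k) ⟪c k, q⟫ =
        Complex.exp (
          -(∑ k, (((‖c k‖ ^ α * γ k * (1 + β k) / 2 : ℝ) : ℂ) * psi α ⟪‖c k‖⁻¹ • c k, q⟫ +
              ((‖c k‖ ^ α * γ k * (1 - β k) / 2 : ℝ) : ℂ) * psi α ⟪-(‖c k‖⁻¹ • c k), q⟫)) +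
          Complex.I *
            ((⟪∑ k, (if α = 1 then μ k - 2 * β k * γ k / Real.pi * Real.log ‖c k‖ else μ k) • c k,
                q⟫ : ℝ) : ℂ)) :=
  stmt6_general d α c hc β γ μ
end

section
/- Let 0 < α < 2 and γ > 0, and let ν be a probability measure on ℝ with characteristic function q ↦ exp(−γ·|q|^α). Then the second moment of ν diverges: ∫_ℝ x² dν(x) = ∞. -/
/-!
A finite second moment makes the characteristic function flat to second order at the origin:
`1 - cos (t x) ≤ t² x² / 2` integrates to `1 - Re φ(t) ≤ t² E[X²] / 2`. For `φ(t) = exp (-γ |t|^α)`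
with `α < 2`, however, `1 - φ(t) ≍ γ |t|^α` decays more slowly than `t²`, so the second moment
cannot be finite.
-/

open MeasureTheory Filter Topology Real ProbabilityTheory BoundedContinuousFunction

lemma re_charFun_eq_integral_cos {μ : Measure ℝ} [IsFiniteMeasure μ] (t : ℝ) :
    (charFun μ t).re = ∫ x, cos (t * x) ∂μ := by
  rw [charFun_eq_integral_innerProbChar, ← RCLike.re_to_complex,
    ← integral_re ((innerProbChar t).integrable μ)]
  congr with x
  rw [RCLike.re_to_complex, innerProbChar_apply, RCLike.inner_apply, conj_trivial,
    Complex.exp_ofReal_mul_I_re]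

lemma one_sub_re_charFun_le {μ : Measure ℝ} [IsProbabilityMeasure μ]
    (h : Integrable (fun x ↦ x ^ 2) μ) (t : ℝ) :
    1 - (charFun μ t).re ≤ t ^ 2 / 2 * ∫ x, x ^ 2 ∂μ := by
  have hcos : Integrable (fun x ↦ cos (t * x)) μ :=
    (integrable_const 1).mono' (by fun_prop) (.of_forall fun x ↦ by simpa using abs_cos_le_one _)
  calc 1 - (charFun μ t).re = ∫ x, (1 - cos (t * x)) ∂μ := by
        rw [integral_sub (integrable_const 1) hcos, re_charFun_eq_integral_cos]; simp
    _ ≤ ∫ x, t ^ 2 / 2 * x ^ 2 ∂μ := by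
        refine integral_mono ((integrable_const 1).sub hcos) (h.const_mul _) fun x ↦ ?_
        linarith [one_sub_sq_div_two_le_cos (x := t * x), mul_pow t x 2]
    _ = t ^ 2 / 2 * ∫ x, x ^ 2 ∂μ := integral_const_mul _ _

lemma lintegral_sq_eq_top_of_tendsto_one_sub_re_charFun_div_sq {μ : Measure ℝ}
    [IsProbabilityMeasure μ]
    (h : Tendsto (fun t ↦ (1 - (charFun μ t).re) / t ^ 2) (𝓝[>] 0) atTop) :
    ∫⁻ x, ENNReal.ofReal (x ^ 2) ∂μ = ⊤ := by
  by_contra hfin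
  have hint : Integrable (fun x ↦ x ^ 2) μ :=
    (lintegral_ofReal_ne_top_iff_integrable (by fun_prop) (.of_forall fun x ↦ sq_nonneg x)).1 hfin
  obtain ⟨t, hlt, ht⟩ :=
    ((h.eventually_gt_atTop ((∫ x, x ^ 2 ∂μ) / 2)).and self_mem_nhdsWithin).exists
  rw [lt_div_iff₀ (by positivity)] at hlt
  linarith [one_sub_re_charFun_le hint t]

lemma div_one_add_le_one_sub_exp_neg {s : ℝ} (hs : 0 ≤ s) : s / (1 + s) ≤ 1 - exp (-s) :=
  calc s / (1 + s) = 1 - (1 + s)⁻¹ := by field_simp; ring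
    _ ≤ 1 - (exp s)⁻¹ := by gcongr; linarith [add_one_le_exp s]
    _ = 1 - exp (-s) := by rw [exp_neg]

lemma tendsto_one_sub_exp_neg_mul_rpow_div_sq {α γ : ℝ} (hα : 0 < α) (hα2 : α < 2)
    (hγ : 0 < γ) : Tendsto (fun t ↦ (1 - exp (-(γ * t ^ α))) / t ^ 2) (𝓝[>] 0) atTop := by
  have hpow : Tendsto (fun t : ℝ ↦ t ^ α) (𝓝[>] 0) (𝓝 0) := by
    simpa [zero_rpow hα.ne'] using
      (continuousAt_rpow_const 0 α (Or.inr hα.le)).tendsto.mono_left nhdsWithin_le_nhds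
  have hcoef : Tendsto (fun t : ℝ ↦ γ / (1 + γ * t ^ α)) (𝓝[>] 0) (𝓝 γ) := by
    simpa [Pi.div_def] using
      tendsto_const_nhds.div ((hpow.const_mul γ).const_add 1) (by norm_num)
  refine tendsto_atTop_mono' _ ?_
    (hcoef.pos_mul_atTop hγ (tendsto_rpow_neg_nhdsGT_zero (sub_neg.2 hα2)))
  filter_upwards [self_mem_nhdsWithin] with t (ht : 0 < t)
  calc γ / (1 + γ * t ^ α) * t ^ (α - 2) = γ * t ^ α / (1 + γ * t ^ α) / t ^ 2 := by
        rw [rpow_sub ht, rpow_two]; ring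
    _ ≤ (1 - exp (-(γ * t ^ α))) / t ^ 2 := by
        gcongr; exact div_one_add_le_one_sub_exp_neg (by positivity)

theorem stmt16 (α γ : ℝ) (hα : 0 < α) (hα2 : α < 2) (hγ : 0 < γ)
    (ν : Measure ℝ) [IsProbabilityMeasure ν]
    (hν : ∀ q : ℝ, ∫ x, Complex.exp (Complex.I * ((q * x : ℝ) : ℂ)) ∂ν =
      Complex.exp (((-(γ * |q| ^ α) : ℝ) : ℂ))) :
    ∫⁻ x, ENNReal.ofReal (x ^ 2) ∂ν = ⊤ := by
  have hre (t : ℝ) : (charFun ν t).re = exp (-(γ * |t| ^ α)) := by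
    have hcharFun : charFun ν t = ∫ x, Complex.exp (Complex.I * ((t * x : ℝ) : ℂ)) ∂ν := by
      simp only [charFun_apply_real, Complex.ofReal_mul, mul_comm Complex.I]
    rw [hcharFun, hν, Complex.exp_ofReal_re]
  refine lintegral_sq_eq_top_of_tendsto_one_sub_re_charFun_div_sq ?_
  refine (tendsto_one_sub_exp_neg_mul_rpow_div_sq hα hα2 hγ).congr' ?_
  filter_upwards [self_mem_nhdsWithin] with t (ht : 0 < t)
  rw [hre, abs_of_pos ht]
end
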